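/- arXiv:2109.00732 — 3 statements merged into one kernel-verified Lean document; each statement's English description precedes it below -/
import Mathlib

section
/- For a K-linear weighted automaton (V, ⟨o, t⟩), the kernel of the unique L-homomorphism ⟦_⟧ : V → K^{A*} into the final coalgebra is the largest K-linear bisimulation on V: it is a K-linear bisimulation, and every K-linear bisimulation R satisfies R ⊆ ker(⟦_⟧). -/
universe u

/-- A relation is `K`-linear iff it is the kernel of some `K`-linear map out of `V`. -/
def IsLinearRel (K : Type u) {V : Type u} [Semiring K] [AddCommMonoid V]
    [Module K V] (S : V → V → Prop) : Prop :=
  ∃ (W : Type u) (_ : AddCommMonoid W) (_ : Module K W) (f : V →ₗ[K] W),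
    ∀ u v : V, S u v ↔ f u = f v

/-- A `K`-linear bisimulation on the automaton `(V, ⟨o, t⟩)`. -/
def IsLinearBisim (K : Type u) {V A : Type u} [Semiring K] [AddCommMonoid V]
    [Module K V] (o : V →ₗ[K] K) (t : V →ₗ[K] (A → V)) (R : V → V → Prop) : Prop :=
  IsLinearRel K R ∧
  (∀ u v : V, R u v → o u = o v) ∧
  (∀ (a : A) (u v : V), R u v → R (t u a) (t v a))

/-- The weighted language `⟦v⟧` recognized by a state `v`. -/
def sigmaL {K V A : Type u} [Semiring K] [AddCommMonoid V] [Module K V]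
    (o : V →ₗ[K] K) (t : V →ₗ[K] (A → V)) (v : V) : List A → K
  | [] => o v
  | a :: w => sigmaL o t (t v a) w

theorem sigmaL_add {K V A : Type u} [Semiring K] [AddCommMonoid V] [Module K V]
    (o : V →ₗ[K] K) (t : V →ₗ[K] (A → V)) (u v : V) (w : List A) :
    sigmaL o t (u + v) w = sigmaL o t u w + sigmaL o t v w := by
  induction w generalizing u v with
  | nil => simp [sigmaL]
  | cons a w ih =>
    simp only [sigmaL, map_add]
    exact ih _ _

theorem sigmaL_smul {K V A : Type u} [Semiring K] [AddCommMonoid V] [Module K V]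
    (o : V →ₗ[K] K) (t : V →ₗ[K] (A → V)) (c : K) (v : V) (w : List A) :
    sigmaL o t (c • v) w = c • sigmaL o t v w := by
  induction w generalizing v with
  | nil => simp [sigmaL]
  | cons a w ih =>
    simp only [sigmaL, map_smul]
    exact ih _

/-- The kernel of the unique `L`-homomorphism into the final coalgebra (i.e.
weighted language equivalence) is the largest `K`-linear bisimulation. -/
theorem ker_final_map_largest_linear_bisimulation {K V A : Type u} [Semiring K]
    [AddCommMonoid V] [Module K V]
    (o : V →ₗ[K] K) (t : V →ₗ[K] (A → V)) :
    IsLinearBisim K o t (fun u v => ∀ w : List A, sigmaL o t u w = sigmaL o t v w) ∧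
    (∀ R : V → V → Prop, IsLinearBisim K o t R →
      ∀ u v : V, R u v → ∀ w : List A, sigmaL o t u w = sigmaL o t v w) := by
  constructor
  · refine ⟨⟨List A → K, inferInstance, inferInstance,
      { toFun := fun v => sigmaL o t v
        map_add' := fun u v => funext fun w => sigmaL_add o t u v w
        map_smul' := fun c v => funext fun w => sigmaL_smul o t c v w }, ?_⟩, ?_, ?_⟩
    · intro u v
      constructor
      · intro h; funext w; exact h w
      · intro h w; exact congrFun h w
    · intro u v h; exact h []
    · intro a u v h w; exact h (a :: w)
  · rintro R ⟨_, ho, ht⟩ u v huv w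
    induction w generalizing u v with
    | nil => exact ho u v huv
    | cons a w ih => exact ih _ _ (ht a u v huv)
end

section
/- For a K-weighted automaton (X, ⟨o, t⟩) with finite branching, every K-weighted bisimulation R is contained in weighted language equivalence: if (x₁, x₂) ∈ R then σ_l(x₁)(w) = σ_l(x₂)(w) for every word w ∈ A*, where σ_l(x)(ε) = o(x) and σ_l(x)(aw') = Σ_{x'∈X} t(x)(a)(x')·σ_l(x')(w'). -/
/-- The weighted language `σ_l(x)` recognized by a state `x` of a `K`-weighted
automaton: `σ_l(x)(ε) = o x` and `σ_l(x)(aw') = Σ_{x'} t x a x' · σ_l(x')(w')`. -/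
def wlang {K X A : Type*} [Semiring K]
    (o : X → K) (t : X → A → (X →₀ K)) : List A → X → K
  | [], x => o x
  | a :: w, x => (t x a).sum fun x' k => k * wlang o t w x'

/-- Every `K`-weighted bisimulation on a `K`-weighted automaton is contained in
weighted language equivalence. -/
theorem weighted_bisimulation_le_language_equivalence {K X A : Type*} [Semiring K]
    (o : X → K) (t : X → A → (X →₀ K))
    (R : X → X → Prop) (hEq : Equivalence R)
    (hout : ∀ x₁ x₂ : X, R x₁ x₂ → o x₁ = o x₂)
    (htrans : ∀ x₁ x₂ : X, R x₁ x₂ → ∀ (a : A) (y : X),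
      (∑ᶠ y' ∈ {y' : X | R y y'}, t x₁ a y') = ∑ᶠ y' ∈ {y' : X | R y y'}, t x₂ a y') :
    ∀ x₁ x₂ : X, R x₁ x₂ → ∀ w : List A, wlang o t w x₁ = wlang o t w x₂ := by
  intro x₁ x₂ hR w
  induction w generalizing x₁ x₂ with
  | nil => exact hout _ _ hR
  | cons a w ih =>
    classical
    letI s : Setoid X := ⟨R, hEq⟩
    set f := wlang o t w with hf
    set S := (t x₁ a).support ∪ (t x₂ a).support with hS
    have key : ∀ x : X, (t x a).support ⊆ S →
        wlang o t (a :: w) x = ∑ c ∈ S.image (Quotient.mk s),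
          (∑ᶠ y' ∈ {y' : X | R (Quotient.out c) y'}, t x a y') * f (Quotient.out c) := by
      intro x hsub
      show (t x a).sum (fun x' k => k * f x') = _
      rw [Finsupp.sum_of_support_subset _ hsub _ (by intro i _; simp)]
      rw [← Finset.sum_fiberwise_of_maps_to
        (fun x' hx' => Finset.mem_image_of_mem (Quotient.mk s) hx')
        (fun x' => t x a x' * f x')]
      refine Finset.sum_congr rfl fun c _ => ?_
      have hmem : ∀ x' : X, Quotient.mk s x' = c ↔ R (Quotient.out c) x' := by
        intro x'
        constructor
        · intro h
          subst h
          exact Quotient.mk_out x'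
        · intro h
          rw [← Quotient.out_eq c]
          exact Quotient.sound (hEq.symm h)
      have hfilter : S.filter (fun x' => Quotient.mk s x' = c)
          = S.filter (fun x' => R (Quotient.out c) x') := by
        apply Finset.filter_congr
        intro x' _
        simp [hmem x']
      rw [hfilter]
      have hfval : ∀ x' ∈ S.filter (fun x' => R (Quotient.out c) x'),
          t x a x' * f x' = t x a x' * f (Quotient.out c) := by
        intro x' hx'
        rw [Finset.mem_filter] at hx'
        rw [ih _ _ (hEq.symm hx'.2)]
      rw [Finset.sum_congr rfl hfval, ← Finset.sum_mul]
      congr 1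
      refine (finsum_mem_eq_sum_of_inter_support_eq _ ?_).symm
      ext y'
      simp only [Set.mem_inter_iff, Set.mem_setOf_eq, Finset.coe_filter,
        Function.mem_support]
      constructor
      · rintro ⟨h1, h2⟩
        exact ⟨⟨hsub (Finsupp.mem_support_iff.mpr h2), h1⟩, h2⟩
      · rintro ⟨⟨_, h1⟩, h2⟩
        exact ⟨h1, h2⟩
    rw [key x₁ (Finset.subset_union_left), key x₂ (Finset.subset_union_right)]
    refine Finset.sum_congr rfl fun c _ => ?_
    rw [htrans x₁ x₂ hR a (Quotient.out c)]
end

section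
/- Every K-weighted bisimulation R on a K-weighted automaton (X, ⟨o_X, t_X⟩) induces a well-defined quotient automaton (X/R, ⟨o_{X/R}, t_{X/R}⟩) with o_{X/R}([x]) = o_X(x) and t_{X/R}([x₁])(a)([x₂]) = Σ_{x'∈[x₂]} t_X(x₁)(a)(x'), and the quotient map ε_R : X → X/R is a W-homomorphism. -/
lemma aux_mapDomain {K X Q : Type*} [AddCommMonoid K] (f : X → Q) (l : X →₀ K) (c : Q) :
    (∑ᶠ x ∈ {x | f x = c}, l x) = Finsupp.mapDomain f l c := by
  classical
  have hfin : ({x | f x = c} ∩ Function.support fun x => l x).Finite :=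
    (l.finite_support).subset (by intro x hx; exact hx.2)
  rw [finsum_mem_eq_sum _ hfin, Finsupp.mapDomain, Finsupp.sum_apply, Finsupp.sum]
  simp only [Finsupp.single_apply]
  rw [← Finset.sum_filter]
  apply Finset.sum_congr _ (fun _ _ => rfl)
  ext x
  simp [Finsupp.mem_support_iff, and_comm, Function.mem_support]

/-- Every `K`-weighted bisimulation `R` on a `K`-weighted automaton induces a
well-defined quotient automaton `(X/R, ⟨o_{X/R}, t_{X/R}⟩)` with
`o_{X/R}[x] = o x` and `t_{X/R}[x₁](a)([x₂]) = Σ_{x'∈[x₂]} t x₁ a x'`, and the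
quotient map is a `W`-homomorphism. -/
theorem weighted_bisimulation_quotient_automaton {K X A : Type*} [Semiring K]
    (o : X → K) (t : X → A → (X →₀ K))
    (R : X → X → Prop) (hEq : Equivalence R)
    (hout : ∀ x₁ x₂ : X, R x₁ x₂ → o x₁ = o x₂)
    (htrans : ∀ x₁ x₂ : X, R x₁ x₂ → ∀ (a : A) (y : X),
      (∑ᶠ y' ∈ {y' : X | R y y'}, t x₁ a y') = ∑ᶠ y' ∈ {y' : X | R y y'}, t x₂ a y') :
    ∃ (o' : Quotient (Setoid.mk R hEq) → K)
      (t' : Quotient (Setoid.mk R hEq) → A → (Quotient (Setoid.mk R hEq) →₀ K)),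
      (∀ x : X, o' (Quotient.mk (Setoid.mk R hEq) x) = o x) ∧
      (∀ (x₁ : X) (a : A) (x₂ : X),
        t' (Quotient.mk (Setoid.mk R hEq) x₁) a (Quotient.mk (Setoid.mk R hEq) x₂) =
          ∑ᶠ x' ∈ {x' : X | R x₂ x'}, t x₁ a x') ∧
      -- the quotient map `x ↦ [x]` is a `W`-homomorphism:
      (∀ (x : X) (a : A) (c : Quotient (Setoid.mk R hEq)),
        (∑ᶠ x' ∈ {x' : X | Quotient.mk (Setoid.mk R hEq) x' = c}, t x a x') =
          t' (Quotient.mk (Setoid.mk R hEq) x) a c) := by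
  set s := Setoid.mk R hEq
  set mk : X → Quotient s := Quotient.mk s
  have hset : ∀ x₂ : X, {x' : X | R x₂ x'} = {x' : X | mk x' = mk x₂} := by
    intro x₂; ext x'
    simp only [Set.mem_setOf_eq, mk, Quotient.eq]
    exact ⟨fun h => hEq.symm h, fun h => hEq.symm h⟩
  refine ⟨Quotient.lift o (fun a b h => hout a b h),
    Quotient.lift (fun x₁ a => Finsupp.mapDomain mk (t x₁ a)) ?_, fun x => rfl, ?_, ?_⟩
  · intro x₁ x₂ h
    funext a
    ext c
    induction c using Quotient.ind with
    | _ y =>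
      rw [← aux_mapDomain mk (t x₁ a), ← aux_mapDomain mk (t x₂ a), ← hset y]
      exact htrans x₁ x₂ h a y
  · intro x₁ a x₂
    rw [hset x₂]
    exact (aux_mapDomain mk (t x₁ a) (mk x₂)).symm
  · intro x a c
    exact aux_mapDomain mk (t x a) c
end
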